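/- arXiv:1910.02743 — 6 statements merged into one kernel-verified Lean document; each statement's English description precedes it below -/
import Mathlib

section
/- Let f : ℝ → ℝ be a twice continuously differentiable function with compact support, and let σ(z) = max(z, 0) be the ReLU function. Then for every x ∈ ℝ, f(x) = ∫₀^{2π} (f''(−tan φ) / (2·|cos φ|³)) · σ(x·cos φ + sin φ) dφ. -/
/-!
For `f ∈ C²_c(ℝ)` one has `f x = ½ ∫ f''(t) |x - t| dt`: `|x - t| / 2` is the Green's function
of `d²/dx²`, and each half line `t ≤ x`, `t > x` contributes `f x` after integrating by parts
twice. In the angular integral the angles `φ` and `φ + π` give the same value of `tan` and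
opposite values of `z = x cos φ + sin φ = cos φ (x + tan φ)`, so together they contribute
`σ z + σ (-z) = |z|`. This folds a period onto `(-π/2, π/2)`, where `t = -tan φ`,
`dt = -dφ / cos² φ` turns the integral into `½ ∫ f''(t) |x - t| dt`.
-/

open MeasureTheory Real Set Filter Topology

section Green

variable {f : ℝ → ℝ}

theorem integral_Iic_deriv_deriv_mul_sub (hf : ContDiff ℝ 2 f) (hs : HasCompactSupport f)
    (x : ℝ) : ∫ t in Iic x, deriv (deriv f) t * (x - t) = f x := by
  have hf' : ContDiff ℝ 1 (deriv f) := hf.iterate_deriv' 1 1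
  set F := fun t => deriv f t * (x - t) + f t
  have hF : ∀ t, HasDerivAt F (deriv (deriv f) t * (x - t)) t := fun t =>
    ((((hf'.differentiable one_ne_zero) t).hasDerivAt.mul ((hasDerivAt_id' t).const_sub x)).add
      ((hf.differentiable two_ne_zero) t).hasDerivAt).congr_deriv (by ring)
  have hint : Integrable fun t => deriv (deriv f) t * (x - t) :=
    ((hf'.continuous_deriv le_rfl).mul (continuous_sub_left x)).integrable_of_hasCompactSupport
      hs.deriv.deriv.mul_right
  have hFs : HasCompactSupport F := hs.deriv.mul_right.add hs
  simpa [F] using integral_Iic_of_hasDerivAt_of_tendsto' (a := x) (fun t _ => hF t)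
    hint.integrableOn (hFs.is_zero_at_infty.mono_left atBot_le_cocompact)

theorem integral_Ioi_deriv_deriv_mul_sub (hf : ContDiff ℝ 2 f) (hs : HasCompactSupport f)
    (x : ℝ) : ∫ t in Ioi x, deriv (deriv f) t * (t - x) = f x := by
  have h := integral_Iic_deriv_deriv_mul_sub (f := fun t => f (-t)) (hf.comp contDiff_neg)
    (hs.comp_homeomorph (Homeomorph.neg ℝ)) (-x)
  have hd' : deriv (fun t => f (-t)) = fun t => -deriv f (-t) := funext (deriv_comp_neg f)
  have hd : deriv (deriv fun t => f (-t)) = fun t => deriv (deriv f) (-t) := by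
    funext t
    simp [hd', deriv_comp_neg]
  rw [hd, ← integral_comp_neg_Ioi] at h
  simpa [neg_add_eq_sub] using h

theorem integral_deriv_deriv_mul_abs_sub (hf : ContDiff ℝ 2 f) (hs : HasCompactSupport f)
    (x : ℝ) : ∫ t, deriv (deriv f) t * |x - t| = 2 * f x := by
  have hint : Integrable fun t => deriv (deriv f) t * |x - t| :=
    ((hf.iterate_deriv' 0 2).continuous.mul
      (continuous_sub_left x).abs).integrable_of_hasCompactSupport hs.deriv.deriv.mul_right
  rw [← intervalIntegral.integral_Iic_add_Ioi hint.integrableOn hint.integrableOn, two_mul]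
  congr 1
  · rw [← integral_Iic_deriv_deriv_mul_sub hf hs x]
    refine setIntegral_congr_fun measurableSet_Iic fun t ht => ?_
    rw [abs_of_nonneg (sub_nonneg.2 ht)]
  · rw [← integral_Ioi_deriv_deriv_mul_sub hf hs x]
    refine setIntegral_congr_fun measurableSet_Ioi fun t ht => ?_
    rw [abs_sub_comm, abs_of_pos (sub_pos.2 ht)]

end Green

theorem integral_comp_neg_tan_div_cos_sq (g : ℝ → ℝ) :
    ∫ φ in Ioo (-(π / 2)) (π / 2), g (-tan φ) / cos φ ^ 2 = ∫ t, g t := by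
  have hder : ∀ φ ∈ Ioo (-(π / 2)) (π / 2), HasDerivWithinAt (fun φ => -tan φ)
      (-(1 / cos φ ^ 2)) (Ioo (-(π / 2)) (π / 2)) φ := fun φ hφ =>
    (hasDerivAt_tan (cos_pos_of_mem_Ioo hφ).ne').neg.hasDerivWithinAt
  have hinj : InjOn (fun φ => -tan φ) (Ioo (-(π / 2)) (π / 2)) :=
    fun a ha b hb h => injOn_tan ha hb (neg_injective h)
  have himg : (fun φ => -tan φ) '' Ioo (-(π / 2)) (π / 2) = univ := by
    rw [show (fun φ : ℝ => -tan φ) = Neg.neg ∘ tan from rfl, image_comp, image_tan_Ioo,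
      image_univ, neg_surjective.range_eq]
  have h := integral_image_eq_integral_abs_deriv_smul measurableSet_Ioo hder hinj g
  rw [himg, setIntegral_univ] at h
  rw [h]
  refine setIntegral_congr_fun measurableSet_Ioo fun φ _ => ?_
  simp [div_eq_inv_mul]

theorem Function.Periodic.intervalIntegral_eq_integral_add_half_shift {E : Type*}
    [NormedAddCommGroup E] [NormedSpace ℝ E] {F : ℝ → E} {c : ℝ}
    (hF : Function.Periodic F (2 * c)) (hcont : Continuous F) (a b : ℝ) :
    ∫ φ in a..a + 2 * c, F φ = ∫ φ in b..b + c, F φ + F (φ + c) := by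
  rw [hF.intervalIntegral_add_eq a b, intervalIntegral.integral_add (hcont.intervalIntegrable _ _)
      ((by fun_prop : Continuous fun φ => F (φ + c)).intervalIntegrable _ _),
    intervalIntegral.integral_comp_add_right, two_mul, ← add_assoc,
    intervalIntegral.integral_add_adjacent_intervals (hcont.intervalIntegrable _ _)
      (hcont.intervalIntegrable _ _)]

noncomputable def reluIntegrand (g : ℝ → ℝ) (x φ : ℝ) : ℝ :=
  g (-tan φ) / (2 * |cos φ| ^ 3) * max (x * cos φ + sin φ) 0

theorem reluIntegrand_periodic (g : ℝ → ℝ) (x : ℝ) :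
    Function.Periodic (reluIntegrand g x) (2 * π) := by
  intro φ
  rw [reluIntegrand, reluIntegrand, two_mul, ← add_assoc, tan_add_pi, tan_add_pi, add_assoc,
    ← two_mul, cos_add_two_pi, sin_add_two_pi]

theorem continuous_reluIntegrand {g : ℝ → ℝ} (hg : Continuous g) (hs : HasCompactSupport g)
    (x : ℝ) : Continuous (reluIntegrand g x) := by
  refine continuous_iff_continuousAt.2 fun φ => ?_
  by_cases hφ : cos φ = 0
  · -- `g (-tan ψ)` vanishes for `ψ` near `φ` as `|tan ψ| → ∞`, and at `φ` itself `x / 0 = 0`.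
    have hcobounded : Tendsto (fun ψ => -tan ψ) (𝓝[≠] φ) (cocompact ℝ) := by
      rw [← Metric.cobounded_eq_cocompact, ← tendsto_norm_atTop_iff_cobounded]
      simpa using tendsto_abs_tan_of_cos_eq_zero hφ
    have hzero : ∀ᶠ ψ in 𝓝[≠] φ, reluIntegrand g x ψ = 0 := by
      filter_upwards [hcobounded.eventually
        ((coclosedCompact_eq_cocompact (X := ℝ)) ▸ hasCompactSupport_iff_eventuallyEq.1 hs)]
        with ψ hψ
      simp [reluIntegrand, hψ]
    rw [← continuousWithinAt_compl_self, ContinuousWithinAt,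
      show reluIntegrand g x φ = 0 by simp [reluIntegrand, hφ]]
    exact tendsto_const_nhds.congr' (hzero.mono fun _ h => h.symm)
  · have : 0 < |cos φ| := abs_pos.2 hφ
    exact ((hg.continuousAt.comp (continuousAt_tan.2 hφ).neg).div (by fun_prop)
      (by positivity)).mul (by fun_prop)

theorem reluIntegrand_add_reluIntegrand_add_pi (g : ℝ → ℝ) (x : ℝ) {φ : ℝ} (hφ : 0 < cos φ) :
    reluIntegrand g x φ + reluIntegrand g x (φ + π) =
      g (-tan φ) * |x - -tan φ| / 2 / cos φ ^ 2 := by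
  have hz : x * cos φ + sin φ = cos φ * (x - -tan φ) := by
    rw [tan_eq_sin_div_cos]; field_simp; ring
  simp only [reluIntegrand, tan_add_pi, cos_add_pi, sin_add_pi, abs_neg]
  rw [← mul_add, show x * -cos φ + -sin φ = -(x * cos φ + sin φ) by ring,
    max_zero_add_max_neg_zero_eq_abs_self, hz, abs_mul, abs_of_pos hφ]
  field_simp

/-- For a compactly supported `C²` function `f : ℝ → ℝ` and the ReLU
activation `σ(z) = max z 0`, one has
`f(x) = ∫₀^{2π} f''(-tan φ) / (2 |cos φ|³) · σ(x cos φ + sin φ) dφ`.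
(Where `cos φ = 0` the integrand is `0`, which here is automatic from the
division-by-zero convention.) -/
theorem statement0 (f : ℝ → ℝ) (hf : ContDiff ℝ 2 f) (hsupp : HasCompactSupport f) (x : ℝ) :
    f x = ∫ φ in (0:ℝ)..(2 * Real.pi),
      deriv (deriv f) (-Real.tan φ) / (2 * |Real.cos φ| ^ 3) *
        max (x * Real.cos φ + Real.sin φ) 0 := by
  have hg : Continuous (deriv (deriv f)) := (hf.iterate_deriv' 0 2).continuous
  change f x = ∫ φ in (0:ℝ)..2 * π, reluIntegrand (deriv (deriv f)) x φ
  rw [← zero_add (2 * π), (reluIntegrand_periodic _ x).intervalIntegral_eq_integral_add_half_shift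
      (continuous_reluIntegrand hg hsupp.deriv.deriv x) 0 (-(π / 2)),
    show -(π / 2) + π = π / 2 by ring, intervalIntegral.integral_of_le (by linarith [pi_pos]),
    integral_Ioc_eq_integral_Ioo]
  rw [setIntegral_congr_fun measurableSet_Ioo fun φ hφ =>
      reluIntegrand_add_reluIntegrand_add_pi _ x (cos_pos_of_mem_Ioo hφ),
    integral_comp_neg_tan_div_cos_sq (fun t => deriv (deriv f) t * |x - t| / 2), integral_div,
    integral_deriv_deriv_mul_abs_sub hf hsupp x]
  ring
end

section
/- For every x ∈ ℝ, ∫₀^{2π} cos φ · σ(x·cos φ + sin φ) dφ = πx/2, where σ(z) = max(z, 0) is the ReLU function. -/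
open MeasureTheory Real Set Filter

lemma abs_part_zero (x : ℝ) :
    ∫ φ in (0:ℝ)..(2 * Real.pi), Real.cos φ * |x * Real.cos φ + Real.sin φ| = 0 := by
  have hc : Continuous fun φ : ℝ => Real.cos φ * |x * Real.cos φ + Real.sin φ| :=
    Real.continuous_cos.mul
      ((continuous_const.mul Real.continuous_cos).add Real.continuous_sin).abs
  have h2 : (∫ φ in Real.pi..(2 * Real.pi), Real.cos φ * |x * Real.cos φ + Real.sin φ|)
      = - ∫ φ in (0:ℝ)..Real.pi, Real.cos φ * |x * Real.cos φ + Real.sin φ| := by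
    have hshift := intervalIntegral.integral_comp_add_right (a := (0:ℝ)) (b := Real.pi)
      (d := Real.pi) (f := fun φ => Real.cos φ * |x * Real.cos φ + Real.sin φ|)
    rw [zero_add, show Real.pi + Real.pi = 2 * Real.pi by ring] at hshift
    rw [← hshift, ← intervalIntegral.integral_neg]
    congr 1
    ext u
    have : |x * Real.cos (u + Real.pi) + Real.sin (u + Real.pi)|
        = |x * Real.cos u + Real.sin u| := by
      rw [Real.cos_add_pi, Real.sin_add_pi, show x * -Real.cos u + -Real.sin u
        = -(x * Real.cos u + Real.sin u) by ring, abs_neg]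
    rw [this, Real.cos_add_pi]
    ring
  have hsplit := intervalIntegral.integral_add_adjacent_intervals
    (a := (0:ℝ)) (b := Real.pi) (c := 2 * Real.pi)
    (f := fun φ => Real.cos φ * |x * Real.cos φ + Real.sin φ|)
    (hc.intervalIntegrable (μ := volume) _ _) (hc.intervalIntegrable (μ := volume) _ _)
  rw [← hsplit, h2]
  ring

lemma lin_part (x : ℝ) :
    ∫ φ in (0:ℝ)..(2 * Real.pi), Real.cos φ * (x * Real.cos φ + Real.sin φ)
      = Real.pi * x := by
  have hderiv : ∀ φ ∈ Set.uIcc (0:ℝ) (2 * Real.pi),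
      HasDerivAt (fun φ : ℝ => x * φ / 2 + x * (Real.sin φ * Real.cos φ) / 2
        + Real.sin φ ^ 2 / 2) (Real.cos φ * (x * Real.cos φ + Real.sin φ)) φ := by
    intro φ _
    have h1 : HasDerivAt (fun φ : ℝ => x * φ / 2) (x / 2) φ := by
      simpa using ((hasDerivAt_id φ).const_mul x).div_const 2
    have h2 : HasDerivAt (fun φ : ℝ => x * (Real.sin φ * Real.cos φ) / 2)
        (x * (Real.cos φ * Real.cos φ + Real.sin φ * -Real.sin φ) / 2) φ :=
      (((Real.hasDerivAt_sin φ).mul (Real.hasDerivAt_cos φ)).const_mul x).div_const 2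
    have h3 : HasDerivAt (fun φ : ℝ => Real.sin φ ^ 2 / 2)
        ((2 : ℕ) * Real.sin φ ^ 1 * Real.cos φ / 2) φ :=
      ((Real.hasDerivAt_sin φ).pow 2).div_const 2
    have := (h1.add h2).add h3
    refine this.congr_deriv (Eq.symm ?_)
    have hs := Real.sin_sq_add_cos_sq φ
    push_cast
    linear_combination (x / 2) * hs
  have hcont : Continuous fun φ : ℝ => Real.cos φ * (x * Real.cos φ + Real.sin φ) :=
    Real.continuous_cos.mul
      ((continuous_const.mul Real.continuous_cos).add Real.continuous_sin)
  rw [intervalIntegral.integral_eq_sub_of_hasDerivAt hderiv (hcont.intervalIntegrable _ _)]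
  simp [Real.sin_two_pi, Real.cos_two_pi]
  ring

/-- `∫₀^{2π} cos φ · σ(x cos φ + sin φ) dφ = πx/2`,
where `σ(z) = max z 0` is the ReLU function. -/
theorem statement3 (x : ℝ) :
    ∫ φ in (0:ℝ)..(2 * Real.pi),
        Real.cos φ * max (x * Real.cos φ + Real.sin φ) 0
      = Real.pi * x / 2 := by
  have hpt : ∀ φ : ℝ, Real.cos φ * max (x * Real.cos φ + Real.sin φ) 0
      = Real.cos φ * (x * Real.cos φ + Real.sin φ) / 2
        + Real.cos φ * |x * Real.cos φ + Real.sin φ| / 2 := by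
    intro φ
    rcases le_total (x * Real.cos φ + Real.sin φ) 0 with h | h
    · rw [max_eq_right h, abs_of_nonpos h]; ring
    · rw [max_eq_left h, abs_of_nonneg h]; ring
  have hc1 : Continuous fun φ : ℝ =>
      Real.cos φ * (x * Real.cos φ + Real.sin φ) / 2 :=
    (Real.continuous_cos.mul
      ((continuous_const.mul Real.continuous_cos).add Real.continuous_sin)).div_const 2
  have hc2 : Continuous fun φ : ℝ =>
      Real.cos φ * |x * Real.cos φ + Real.sin φ| / 2 :=
    (Real.continuous_cos.mul
      ((continuous_const.mul Real.continuous_cos).add Real.continuous_sin).abs).div_const 2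
  simp_rw [hpt]
  rw [intervalIntegral.integral_add (hc1.intervalIntegrable _ _) (hc2.intervalIntegrable _ _),
    intervalIntegral.integral_div, intervalIntegral.integral_div, lin_part, abs_part_zero]
  ring
end

section
/- For every x ∈ ℝ, ∫₀^{2π} sin φ · σ(x·cos φ + sin φ) dφ = π/2, where σ(z) = max(z, 0) is the ReLU function. -/
/-!
Write `σ z = (z + |z|) / 2`. The linear part contributes
`∫₀^{2π} sin φ (x cos φ + sin φ) dφ = ∫₀^{2π} sin² φ dφ = π`, while the absolute-value part
`sin φ · |x cos φ + sin φ|` changes sign under `φ ↦ φ + π`, so its integral over a full period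
vanishes.
-/

open MeasureTheory Real

theorem Function.Antiperiodic.intervalIntegral_add_two_mul_eq_zero {E : Type*}
    [NormedAddCommGroup E] [NormedSpace ℝ E] {f : ℝ → E} {c : ℝ}
    (hf : Function.Antiperiodic f c) {a : ℝ} (hint : IntervalIntegrable f volume a (a + c)) :
    ∫ t in a..a + 2 * c, f t = 0 := by
  have hint' : IntervalIntegrable f volume (a + c) (a + 2 * c) := by
    have h := (hint.comp_sub_right c).neg
    rw [show a + c + c = a + 2 * c by ring] at h
    convert h using 1
    ext t
    simp [hf.sub_eq]
  have hshift : ∫ t in a + c..a + 2 * c, f t = -∫ t in a..a + c, f t := by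
    rw [show a + 2 * c = a + c + c by ring, ← intervalIntegral.integral_comp_add_right,
      funext hf, intervalIntegral.integral_neg]
  rw [← intervalIntegral.integral_add_adjacent_intervals hint hint', hshift, add_neg_cancel]

theorem max_zero_eq_add_abs_div_two (z : ℝ) : max z 0 = (z + |z|) / 2 := by
  rw [← posPart_def, add_abs_eq_two_nsmul_posPart, nsmul_eq_mul]
  ring

theorem antiperiodic_sin_mul_abs_mul_cos_add_sin (x : ℝ) :
    Function.Antiperiodic (fun φ => sin φ * |x * cos φ + sin φ|) π := by
  intro φ
  simp only [sin_add_pi, cos_add_pi]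
  rw [show x * -cos φ + -sin φ = -(x * cos φ + sin φ) by ring, abs_neg, neg_mul]

theorem integral_sin_mul_abs_mul_cos_add_sin (x : ℝ) :
    ∫ φ in (0:ℝ)..2 * π, sin φ * |x * cos φ + sin φ| = 0 := by
  simpa using (antiperiodic_sin_mul_abs_mul_cos_add_sin x).intervalIntegral_add_two_mul_eq_zero
    (a := 0) (Continuous.intervalIntegrable (by fun_prop) _ _)

theorem integral_sin_mul_mul_cos_add_sin (x : ℝ) :
    ∫ φ in (0:ℝ)..2 * π, sin φ * (x * cos φ + sin φ) = π := by
  simp only [mul_add, ← mul_assoc, mul_comm (sin _) x, ← sq]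
  rw [intervalIntegral.integral_add (Continuous.intervalIntegrable (by fun_prop) _ _)
      (Continuous.intervalIntegrable (by fun_prop) _ _)]
  simp only [mul_assoc, intervalIntegral.integral_const_mul, integral_sin_mul_cos₁,
    integral_sin_sq]
  simp

/-- `∫₀^{2π} sin φ · σ(x cos φ + sin φ) dφ = π/2`,
where `σ(z) = max z 0` is the ReLU function. -/
theorem statement4 (x : ℝ) :
    ∫ φ in (0:ℝ)..(2 * Real.pi),
        Real.sin φ * max (x * Real.cos φ + Real.sin φ) 0
      = Real.pi / 2 := by
  have hsplit : ∀ φ, sin φ * max (x * cos φ + sin φ) 0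
      = (sin φ * (x * cos φ + sin φ) + sin φ * |x * cos φ + sin φ|) / 2 := fun φ => by
    rw [max_zero_eq_add_abs_div_two]
    ring
  simp only [hsplit, intervalIntegral.integral_div]
  rw [intervalIntegral.integral_add (Continuous.intervalIntegrable (by fun_prop) _ _)
      (Continuous.intervalIntegrable (by fun_prop) _ _),
    integral_sin_mul_mul_cos_add_sin, integral_sin_mul_abs_mul_cos_add_sin, add_zero]
end

section
/- For every x ∈ ℝ, ∫₀^{2π} |cos φ| · σ(x·cos φ + sin φ) dφ = x·arctan x + 1, where σ(z) = max(z, 0) is the ReLU function. -/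
open MeasureTheory Real Set Filter

private lemma antider5 (x a b : ℝ) :
    ∫ φ in a..b, Real.cos φ * (x * Real.cos φ + Real.sin φ)
      = (x * (b + Real.sin b * Real.cos b) / 2 + Real.sin b ^ 2 / 2)
      - (x * (a + Real.sin a * Real.cos a) / 2 + Real.sin a ^ 2 / 2) := by
  have key : ∀ φ : ℝ, HasDerivAt
      (fun t => x * (t + Real.sin t * Real.cos t) / 2 + Real.sin t ^ 2 / 2)
      (Real.cos φ * (x * Real.cos φ + Real.sin φ)) φ := by
    intro φ
    have h1 := (Real.hasDerivAt_sin φ).mul (Real.hasDerivAt_cos φ)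
    have h2 := (((hasDerivAt_id φ).add h1).const_mul x).div_const 2
    have h3 := ((Real.hasDerivAt_sin φ).pow 2).div_const 2
    refine (h2.add h3).congr_deriv ?_
    have hpy := Real.sin_sq_add_cos_sq φ
    norm_num
    linear_combination (-x / 2) * hpy
  rw [intervalIntegral.integral_eq_sub_of_hasDerivAt (fun φ _ => key φ)
    ((Continuous.mul Real.continuous_cos (by continuity)).intervalIntegrable a b)]

/-- `∫₀^{2π} |cos φ| · σ(x cos φ + sin φ) dφ = x arctan x + 1`,
where `σ(z) = max z 0` is the ReLU function. -/
theorem statement5 (x : ℝ) :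
    ∫ φ in (0:ℝ)..(2 * Real.pi),
        |Real.cos φ| * max (x * Real.cos φ + Real.sin φ) 0
      = x * Real.arctan x + 1 := by
  set β := Real.arctan x with hβ
  have hβ1 : -(Real.pi / 2) < β := Real.neg_pi_div_two_lt_arctan x
  have hβ2 : β < Real.pi / 2 := Real.arctan_lt_pi_div_two x
  have hpi := Real.pi_pos
  have hcβ : 0 < Real.cos β := Real.cos_arctan_pos x
  have hsc : Real.sin β = x * Real.cos β := by
    have := Real.tan_arctan x
    rw [Real.tan_eq_sin_div_cos] at this
    field_simp [hcβ.ne'] at this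
    linarith [this]
  -- sign identity
  have hkey : ∀ φ : ℝ, x * Real.cos φ + Real.sin φ = Real.sin (φ + β) / Real.cos β := by
    intro φ
    rw [Real.sin_add]
    field_simp
    linear_combination (-Real.cos φ) * hsc
  set f : ℝ → ℝ := fun φ => |Real.cos φ| * max (x * Real.cos φ + Real.sin φ) 0 with hf
  have hfc : Continuous f := by
    apply Continuous.mul (Real.continuous_cos.abs)
    exact Continuous.max (by continuity) continuous_const
  have hper : Function.Periodic f (2 * Real.pi) := by
    intro t
    simp [hf, Real.cos_add_two_pi, Real.sin_add_two_pi]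
  -- shift the integral
  have shift : (∫ φ in (0:ℝ)..(2 * Real.pi), f φ)
      = ∫ φ in (-β)..(-β + 2 * Real.pi), f φ := by
    have := hper.intervalIntegral_add_eq 0 (-β)
    simpa using this
  -- split points
  have h1 : -β ≤ Real.pi / 2 := by linarith
  have h2 : Real.pi / 2 ≤ Real.pi - β := by linarith
  have h3 : Real.pi - β ≤ -β + 2 * Real.pi := by linarith
  have hint : ∀ a b : ℝ, IntervalIntegrable f volume a b :=
    fun a b => hfc.intervalIntegrable a b
  have split : (∫ φ in (-β)..(-β + 2 * Real.pi), f φ)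
      = (∫ φ in (-β)..(Real.pi/2), f φ) + (∫ φ in (Real.pi/2)..(Real.pi - β), f φ)
        + (∫ φ in (Real.pi - β)..(-β + 2 * Real.pi), f φ) := by
    rw [intervalIntegral.integral_add_adjacent_intervals (hint _ _) (hint _ _),
      intervalIntegral.integral_add_adjacent_intervals (hint _ _) (hint _ _)]
  -- piece A : on [-β, π/2]
  have hA : (∫ φ in (-β)..(Real.pi/2), f φ)
      = ∫ φ in (-β)..(Real.pi/2), Real.cos φ * (x * Real.cos φ + Real.sin φ) := by
    apply intervalIntegral.integral_congr
    intro φ hφ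
    rw [uIcc_of_le h1] at hφ
    have hc : 0 ≤ Real.cos φ :=
      Real.cos_nonneg_of_mem_Icc ⟨by linarith [hφ.1], hφ.2⟩
    have hs : 0 ≤ x * Real.cos φ + Real.sin φ := by
      rw [hkey φ]
      apply div_nonneg _ hcβ.le
      apply Real.sin_nonneg_of_nonneg_of_le_pi <;> [linarith [hφ.1]; linarith [hφ.2]]
    simp [hf, abs_of_nonneg hc, max_eq_left hs]
  -- piece B : on [π/2, π - β]
  have hB : (∫ φ in (Real.pi/2)..(Real.pi - β), f φ)
      = -∫ φ in (Real.pi/2)..(Real.pi - β), Real.cos φ * (x * Real.cos φ + Real.sin φ) := by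
    rw [← intervalIntegral.integral_neg]
    apply intervalIntegral.integral_congr
    intro φ hφ
    rw [uIcc_of_le h2] at hφ
    have hc : Real.cos φ ≤ 0 :=
      Real.cos_nonpos_of_pi_div_two_le_of_le hφ.1 (by linarith [hφ.2])
    have hs : 0 ≤ x * Real.cos φ + Real.sin φ := by
      rw [hkey φ]
      apply div_nonneg _ hcβ.le
      apply Real.sin_nonneg_of_nonneg_of_le_pi <;> [linarith [hφ.1]; linarith [hφ.2]]
    simp [hf, abs_of_nonpos hc, max_eq_left hs]
  -- piece C : zero
  have hC : (∫ φ in (Real.pi - β)..(-β + 2 * Real.pi), f φ) = 0 := by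
    rw [show (0:ℝ) = ∫ φ in (Real.pi - β)..(-β + 2 * Real.pi), (0:ℝ) by simp]
    apply intervalIntegral.integral_congr
    intro φ hφ
    rw [uIcc_of_le h3] at hφ
    have hs : x * Real.cos φ + Real.sin φ ≤ 0 := by
      rw [hkey φ]
      apply div_nonpos_of_nonpos_of_nonneg _ hcβ.le
      have : 0 ≤ Real.sin (φ + β - Real.pi) := by
        apply Real.sin_nonneg_of_nonneg_of_le_pi <;> [linarith [hφ.1]; linarith [hφ.2]]
      rw [Real.sin_sub_pi] at this
      linarith
    simp [hf, max_eq_right hs]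
  rw [shift, split, hA, hB, hC, antider5, antider5]
  have e1 : Real.sin (Real.pi / 2) = 1 := Real.sin_pi_div_two
  have e2 : Real.cos (Real.pi / 2) = 0 := Real.cos_pi_div_two
  have e3 : Real.sin (-β) = -Real.sin β := Real.sin_neg β
  have e4 : Real.cos (-β) = Real.cos β := Real.cos_neg β
  have e5 : Real.sin (Real.pi - β) = Real.sin β := Real.sin_pi_sub β
  have e6 : Real.cos (Real.pi - β) = -Real.cos β := Real.cos_pi_sub β
  rw [e1, e2, e3, e4, e5, e6]
  linear_combination (-Real.sin β) * hsc
end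

section
/- Suppose c ∈ L¹[0, 2π] satisfies the four orthogonality conditions ∫_{−π/2}^{π/2} c(φ)·cos φ dφ = ∫_{−π/2}^{π/2} c(φ+π)·cos φ dφ = ∫_{−π/2}^{π/2} c(φ)·sin φ dφ = ∫_{−π/2}^{π/2} c(φ+π)·sin φ dφ = 0 (with c extended 2π-periodically), and let f(x) = ∫₀^{2π} c(φ)·σ(x·cos φ + sin φ) dφ. Then f(x) → 0 as x → +∞ and as x → −∞, f is differentiable everywhere, and x·f′(x) → 0 as x → +∞ and as x → −∞. -/
/-!
Writing `x cos φ + sin φ = √(1 + x²) sin (φ + arctan x)`, the ReLU cuts out the half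
period `[-arctan x, π - arctan x]`, so `f x = x A x + B x` with `A x`, `B x` the integrals of
`c cos` and `c sin` over it, and differentiating under the integral sign gives `f' = A`.
As `x → ∞`, `arctan x → π/2`, so `B x → 0` by the sine condition. By the cosine condition,
`A x` is an integral of `c cos` over two intervals of length `π/2 - arctan x` on which
`|cos| ≤ cos (arctan x)`, and `x cos (arctan x) ≤ 1`; so `|x A x|` is at most the mass of `|c|`
on these intervals, which tends to `0`. The substitution `φ ↦ π - φ` exchanges `x` with `-x`
and the conditions at `0` with those at `π`.
-/

open MeasureTheory Real Set Filter Topology intervalIntegral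
open scoped Interval

theorem mul_cos_add_sin_eq (x φ : ℝ) :
    x * cos φ + sin φ = √(1 + x ^ 2) * sin (φ + arctan x) := by
  have : 0 < √(1 + x ^ 2) := by positivity
  rw [sin_add, sin_arctan, cos_arctan]
  field_simp
  ring

theorem mul_cos_add_sin_nonneg {x φ : ℝ} (h₀ : -arctan x ≤ φ)
    (h₁ : φ ≤ π - arctan x) : 0 ≤ x * cos φ + sin φ := by
  rw [mul_cos_add_sin_eq]
  exact mul_nonneg (sqrt_nonneg _) (sin_nonneg_of_nonneg_of_le_pi (by linarith) (by linarith))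

theorem mul_cos_add_sin_neg {x φ : ℝ} (h₀ : π - arctan x < φ)
    (h₁ : φ < 2 * π - arctan x) : x * cos φ + sin φ < 0 := by
  rw [mul_cos_add_sin_eq, ← sin_sub_two_pi]
  exact mul_neg_of_pos_of_neg (by positivity)
    (sin_neg_of_neg_of_neg_pi_lt (by linarith) (by linarith))

theorem countable_setOf_mul_cos_add_sin_eq_zero (x : ℝ) :
    {φ | x * cos φ + sin φ = 0}.Countable := by
  refine (countable_range fun n : ℤ => n * π - arctan x).mono fun φ hφ => ?_
  have hsin : sin (φ + arctan x) = 0 := by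
    simpa [mul_cos_add_sin_eq, (by positivity : 0 < √(1 + x ^ 2)).ne'] using hφ
  obtain ⟨n, hn⟩ := sin_eq_zero_iff.1 hsin
  exact ⟨n, by linarith⟩

theorem abs_cos_le_cos_of_le_abs {a φ : ℝ} (ha : 0 ≤ a) (h₁ : a ≤ |φ|)
    (h₂ : |φ| ≤ π - a) : |cos φ| ≤ cos a := by
  rw [← cos_abs φ, abs_le]
  constructor
  · rw [neg_le, ← cos_pi_sub]
    exact cos_le_cos_of_nonneg_of_le_pi ha (by linarith [abs_nonneg φ]) (by linarith)
  · exact cos_le_cos_of_nonneg_of_le_pi ha (by linarith) h₁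

theorem HasDerivAt.max_zero_of_pos {g : ℝ → ℝ} {g' x : ℝ} (hg : HasDerivAt g g' x)
    (hx : 0 < g x) : HasDerivAt (fun y => max (g y) 0) g' x :=
  hg.congr_of_eventuallyEq <|
    (hg.continuousAt.eventually (lt_mem_nhds hx)).mono fun _ hy => max_eq_left hy.le

theorem ContinuousAt.hasDerivAt_max_zero_of_neg {g : ℝ → ℝ} {x : ℝ} (hg : ContinuousAt g x)
    (hx : g x < 0) : HasDerivAt (fun y => max (g y) 0) 0 x :=
  (hasDerivAt_const x 0).congr_of_eventuallyEq <|
    (hg.eventually (gt_mem_nhds hx)).mono fun _ hy => max_eq_right hy.le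

theorem abs_intervalIntegral_mul_le {c g : ℝ → ℝ} {u v M : ℝ} (huv : u ≤ v)
    (hc : IntervalIntegrable c volume u v) (hg : ∀ φ ∈ Icc u v, |g φ| ≤ M) :
    |∫ φ in u..v, c φ * g φ| ≤ M * ∫ φ in u..v, |c φ| := by
  rw [← intervalIntegral.integral_const_mul, ← Real.norm_eq_abs]
  refine norm_integral_le_of_norm_le huv (ae_of_all _ fun φ hφ => ?_) (hc.abs.const_mul M)
  rw [Real.norm_eq_abs, abs_mul, mul_comm M]
  exact mul_le_mul_of_nonneg_left (hg φ (Ioc_subset_Icc_self hφ)) (abs_nonneg _)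

theorem Function.Periodic.intervalIntegral_eq_of_forall_Ioo_eq_zero {g : ℝ → ℝ} {T : ℝ}
    (hg : Function.Periodic g T) {s u : ℝ} (hint : IntervalIntegrable g volume s (s + T))
    (hsu : s ≤ u) (hu : u ≤ s + T) (h₀ : ∀ φ ∈ Ioo u (s + T), g φ = 0) :
    ∫ φ in (0:ℝ)..T, g φ = ∫ φ in s..u, g φ := by
  have htail : ∫ φ in u..(s + T), g φ = 0 := by
    rw [integral_of_le hu, integral_Ioc_eq_integral_Ioo]
    exact setIntegral_eq_zero_of_forall_eq_zero h₀
  have hu' : u ∈ uIcc s (s + T) := mem_uIcc_of_le hsu hu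
  have hsplit := integral_add_adjacent_intervals
    (hint.mono_set (uIcc_subset_uIcc left_mem_uIcc hu'))
    (hint.mono_set (uIcc_subset_uIcc hu' right_mem_uIcc))
  rw [← zero_add T, hg.intervalIntegral_add_eq 0 s, ← hsplit, htail, add_zero]

theorem continuous_intervalIntegral_of_continuous_bounds {h : ℝ → ℝ}
    (hh : ∀ a b, IntervalIntegrable h volume a b) {u v : ℝ → ℝ} (hu : Continuous u)
    (hv : Continuous v) : Continuous fun t => ∫ φ in (u t)..(v t), h φ :=
  (((continuous_primitive hh 0).comp hv).sub ((continuous_primitive hh 0).comp hu)).congr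
    fun _ => integral_interval_sub_left (hh 0 _) (hh 0 _)

theorem tendsto_intervalIntegral_arctan_atTop {h : ℝ → ℝ}
    (hh : ∀ a b, IntervalIntegrable h volume a b) :
    Tendsto (fun x => ∫ φ in (-arctan x)..(π - arctan x), h φ) atTop
      (𝓝 (∫ φ in (-(π / 2))..(π / 2), h φ)) := by
  have := ((continuous_intervalIntegral_of_continuous_bounds hh continuous_neg
    (continuous_sub_left π)).tendsto (π / 2)).comp
    (tendsto_arctan_atTop.mono_right nhdsWithin_le_nhds)
  rwa [show π - π / 2 = π / 2 by ring] at this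

noncomputable def reluTransform (c : ℝ → ℝ) (x : ℝ) : ℝ :=
  ∫ φ in (0:ℝ)..(2 * π), c φ * max (x * cos φ + sin φ) 0

section ReluTransform

variable {c : ℝ → ℝ}

-- `≤` rather than `<`: the indicator is then `1` on the whole closed half period where the ReLU
-- is active; the choice only matters on the null set where `x cos φ + sin φ = 0`.
theorem hasDerivAt_reluTransform_integral_indicator
    (hc : IntervalIntegrable c volume 0 (2 * π)) (x : ℝ) :
    HasDerivAt (reluTransform c)
      (∫ φ in (0:ℝ)..(2 * π), {φ | 0 ≤ x * cos φ + sin φ}.indicator (fun φ => c φ * cos φ) φ)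
      x := by
  have hmeas : AEStronglyMeasurable c (volume.restrict (Ι 0 (2 * π))) :=
    (intervalIntegrable_iff.1 hc).aestronglyMeasurable
  have hcont : ∀ y : ℝ, Continuous fun φ => max (y * cos φ + sin φ) 0 := fun y => by fun_prop
  refine (hasDerivAt_integral_of_dominated_loc_of_lip
    (F := fun y φ => c φ * max (y * cos φ + sin φ) 0)
    (F' := {φ | 0 ≤ x * cos φ + sin φ}.indicator fun φ => c φ * cos φ)
    (bound := fun φ => |c φ|) univ_mem
    (Eventually.of_forall fun y => hmeas.mul (hcont y).aestronglyMeasurable)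
    (hc.mul_continuousOn (hcont x).continuousOn)
    ((hmeas.mul continuous_cos.aestronglyMeasurable).indicator
      (isClosed_le continuous_const (by fun_prop)).measurableSet)
    (ae_of_all _ fun φ _ => LipschitzOnWith.of_dist_le_mul fun y _ z _ => ?_) hc.abs
    ?_).2
  · rw [Real.coe_nnabs, abs_abs, Real.dist_eq, Real.dist_eq, ← mul_sub, abs_mul]
    refine mul_le_mul_of_nonneg_left ((abs_max_sub_max_le_abs _ _ 0).trans ?_) (abs_nonneg _)
    rw [add_sub_add_right_eq_sub, ← sub_mul, abs_mul]
    exact mul_le_of_le_one_right (abs_nonneg _) (abs_cos_le_one φ)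
  · filter_upwards [(countable_setOf_mul_cos_add_sin_eq_zero x).ae_notMem volume]
      with φ hφ _
    have hlin : HasDerivAt (fun y => y * cos φ + sin φ) (cos φ) x := by
      simpa using ((hasDerivAt_id x).mul_const (cos φ)).add_const (sin φ)
    rcases lt_or_gt_of_ne (hφ : x * cos φ + sin φ ≠ 0) with hneg | hpos
    · rw [indicator_of_notMem (show φ ∉ {φ | 0 ≤ x * cos φ + sin φ} from not_le.2 hneg)]
      simpa only [mul_zero] using
        (hlin.continuousAt.hasDerivAt_max_zero_of_neg hneg).const_mul (c φ)
    · rw [indicator_of_mem (show φ ∈ {φ | 0 ≤ x * cos φ + sin φ} from hpos.le)]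
      exact (hlin.max_zero_of_pos hpos).const_mul (c φ)

theorem reluTransform_eq_mul_add (hper : Function.Periodic c (2 * π))
    (hc : ∀ a b, IntervalIntegrable c volume a b) (x : ℝ) :
    reluTransform c x = x * (∫ φ in (-arctan x)..(π - arctan x), c φ * cos φ)
      + ∫ φ in (-arctan x)..(π - arctan x), c φ * sin φ := by
  have hper' : Function.Periodic (fun φ => c φ * max (x * cos φ + sin φ) 0) (2 * π) :=
    fun φ => by simp only [hper φ, cos_add_two_pi, sin_add_two_pi]
  rw [reluTransform, hper'.intervalIntegral_eq_of_forall_Ioo_eq_zero (s := -arctan x)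
      (u := π - arctan x)
      ((hc _ _).mul_continuousOn (by fun_prop)) (by linarith [pi_pos]) (by linarith [pi_pos])
      fun φ hφ => by rw [max_eq_right (mul_cos_add_sin_neg hφ.1 (by linarith [hφ.2])).le,
        mul_zero],
    ← intervalIntegral.integral_const_mul, ← integral_add
      (((hc _ _).mul_continuousOn continuous_cos.continuousOn).const_mul x)
      ((hc _ _).mul_continuousOn continuous_sin.continuousOn)]
  refine integral_congr fun φ hφ => ?_
  rw [uIcc_of_le (by linarith [pi_pos])] at hφ
  simp only [max_eq_left (mul_cos_add_sin_nonneg hφ.1 hφ.2)]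
  ring

theorem hasDerivAt_reluTransform (hper : Function.Periodic c (2 * π))
    (hc : ∀ a b, IntervalIntegrable c volume a b) (x : ℝ) :
    HasDerivAt (reluTransform c) (∫ φ in (-arctan x)..(π - arctan x), c φ * cos φ) x := by
  convert hasDerivAt_reluTransform_integral_indicator (hc 0 (2 * π)) x using 1
  have hper' : Function.Periodic
      ({φ | 0 ≤ x * cos φ + sin φ}.indicator fun φ => c φ * cos φ) (2 * π) :=
    fun φ => by simp only [indicator, mem_ofPred_eq, hper φ, cos_add_two_pi, sin_add_two_pi]
  have hint : IntervalIntegrable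
      ({φ | 0 ≤ x * cos φ + sin φ}.indicator fun φ => c φ * cos φ) volume
      (-arctan x) (-arctan x + 2 * π) :=
    intervalIntegrable_iff.2 <| (intervalIntegrable_iff.1 <|
      (hc _ _).mul_continuousOn continuous_cos.continuousOn).indicator
        (isClosed_le continuous_const (by fun_prop)).measurableSet
  rw [hper'.intervalIntegral_eq_of_forall_Ioo_eq_zero hint (u := π - arctan x)
      (by linarith [pi_pos]) (by linarith [pi_pos]) fun φ hφ => indicator_of_notMem
        (show φ ∉ {φ | 0 ≤ x * cos φ + sin φ} from
          not_le.2 (mul_cos_add_sin_neg hφ.1 (by linarith [hφ.2]))) _]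
  refine integral_congr fun φ hφ => ?_
  rw [uIcc_of_le (by linarith [pi_pos])] at hφ
  exact (indicator_of_mem (show φ ∈ {φ | 0 ≤ x * cos φ + sin φ} from
    mul_cos_add_sin_nonneg hφ.1 hφ.2) (fun φ => c φ * cos φ)).symm

theorem abs_mul_intervalIntegral_arctan_cos_le (hc : ∀ a b, IntervalIntegrable c volume a b)
    (h₁ : ∫ φ in (-(π / 2))..(π / 2), c φ * cos φ = 0) {x : ℝ} (hx : 0 ≤ x) :
    |x * ∫ φ in (-arctan x)..(π - arctan x), c φ * cos φ|
      ≤ (∫ φ in (-(π / 2))..(-arctan x), |c φ|) + ∫ φ in (π / 2)..(π - arctan x), |c φ| := by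
  set a := arctan x
  have ha₀ : 0 ≤ a := arctan_nonneg.2 hx
  have ha₁ : a < π / 2 := arctan_lt_pi_div_two x
  have hsplit : ∫ φ in (-a)..(π - a), c φ * cos φ =
      (∫ φ in (π / 2)..(π - a), c φ * cos φ) - ∫ φ in (-(π / 2))..(-a), c φ * cos φ := by
    have hcc : ∀ u v, IntervalIntegrable (fun φ => c φ * cos φ) volume u v :=
      fun u v => (hc u v).mul_continuousOn continuous_cos.continuousOn
    rw [← sub_zero (∫ φ in (-a)..(π - a), c φ * cos φ), ← h₁,
      integral_interval_sub_interval_comm (hcc _ _) (hcc _ _) (hcc _ _),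
      integral_symm (-a), integral_symm (π - a)]
    ring
  have hleft := abs_intervalIntegral_mul_le (u := -(π / 2)) (v := -a) (g := cos) (M := cos a)
    (by linarith) (hc _ _)
    fun φ hφ => abs_cos_le_cos_of_le_abs ha₀
      (by rw [abs_of_nonpos (by linarith [hφ.2])]; linarith [hφ.2])
      (by rw [abs_of_nonpos (by linarith [hφ.2])]; linarith [hφ.1])
  have hright := abs_intervalIntegral_mul_le (u := π / 2) (v := π - a) (g := cos) (M := cos a)
    (by linarith) (hc _ _)
    fun φ hφ => abs_cos_le_cos_of_le_abs ha₀
      (by rw [abs_of_nonneg (by linarith [hφ.1, pi_pos])]; linarith [hφ.1])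
      (by rw [abs_of_nonneg (by linarith [hφ.1, pi_pos])]; linarith [hφ.2])
  have hxcos : x * cos a ≤ 1 := by
    rw [cos_arctan, mul_one_div, div_le_one (by positivity)]
    exact le_sqrt_of_sq_le (by linarith)
  set m := (∫ φ in (-(π / 2))..(-a), |c φ|) + ∫ φ in (π / 2)..(π - a), |c φ| with hm
  have hm₀ : 0 ≤ m := add_nonneg (integral_nonneg (by linarith) fun _ _ => abs_nonneg _)
    (integral_nonneg (by linarith) fun _ _ => abs_nonneg _)
  calc |x * ∫ φ in (-a)..(π - a), c φ * cos φ|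
      ≤ x * (cos a * m) := by
        rw [abs_mul, abs_of_nonneg hx, hsplit, hm, mul_add]
        exact mul_le_mul_of_nonneg_left ((abs_sub _ _).trans (by linarith)) hx
    _ = (x * cos a) * m := by ring
    _ ≤ m := mul_le_of_le_one_left hm₀ hxcos

theorem tendsto_mul_intervalIntegral_arctan_cos_atTop
    (hc : ∀ a b, IntervalIntegrable c volume a b)
    (h₁ : ∫ φ in (-(π / 2))..(π / 2), c φ * cos φ = 0) :
    Tendsto (fun x => x * ∫ φ in (-arctan x)..(π - arctan x), c φ * cos φ) atTop (𝓝 0) := by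
  refine squeeze_zero_norm'
    ((eventually_ge_atTop 0).mono fun x hx => abs_mul_intervalIntegral_arctan_cos_le hc h₁ hx) ?_
  have hc' : ∀ a b, IntervalIntegrable (fun φ => |c φ|) volume a b := fun a b => (hc a b).abs
  have hmass := (((continuous_intervalIntegral_of_continuous_bounds hc'
      (continuous_const (y := -(π / 2))) continuous_neg).add
    (continuous_intervalIntegral_of_continuous_bounds hc'
      (continuous_const (y := π / 2)) (continuous_sub_left π))).tendsto (π / 2)).comp
    (tendsto_arctan_atTop.mono_right nhdsWithin_le_nhds)
  simpa [Function.comp_def, show π - π / 2 = π / 2 by ring] using hmass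

theorem tendsto_reluTransform_atTop (hper : Function.Periodic c (2 * π))
    (hc : ∀ a b, IntervalIntegrable c volume a b)
    (h₁ : ∫ φ in (-(π / 2))..(π / 2), c φ * cos φ = 0)
    (h₃ : ∫ φ in (-(π / 2))..(π / 2), c φ * sin φ = 0) :
    Tendsto (reluTransform c) atTop (𝓝 0) := by
  have hsin := tendsto_intervalIntegral_arctan_atTop
    fun a b => (hc a b).mul_continuousOn continuous_sin.continuousOn
  rw [h₃] at hsin
  simpa [← reluTransform_eq_mul_add hper hc] using
    (tendsto_mul_intervalIntegral_arctan_cos_atTop hc h₁).add hsin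

theorem tendsto_mul_deriv_reluTransform_atTop (hper : Function.Periodic c (2 * π))
    (hc : ∀ a b, IntervalIntegrable c volume a b)
    (h₁ : ∫ φ in (-(π / 2))..(π / 2), c φ * cos φ = 0) :
    Tendsto (fun x => x * deriv (reluTransform c) x) atTop (𝓝 0) := by
  simpa only [(hasDerivAt_reluTransform hper hc _).deriv] using
    tendsto_mul_intervalIntegral_arctan_cos_atTop hc h₁

theorem reluTransform_comp_pi_sub (hper : Function.Periodic c (2 * π)) (x : ℝ) :
    reluTransform (fun φ => c (π - φ)) x = reluTransform c (-x) := by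
  have hper' : Function.Periodic (fun φ => c φ * max (-x * cos φ + sin φ) 0) (2 * π) :=
    fun φ => by simp only [hper φ, cos_add_two_pi, sin_add_two_pi]
  have hrefl := integral_comp_sub_left (a := 0) (b := 2 * π)
    (fun φ => c φ * max (-x * cos φ + sin φ) 0) π
  simp only [cos_pi_sub, sin_pi_sub, neg_mul_neg] at hrefl
  rw [reluTransform, reluTransform, hrefl, show π - 0 = π - 2 * π + 2 * π by ring,
    hper'.intervalIntegral_add_eq _ 0, zero_add]

theorem intervalIntegral_comp_pi_sub_mul (g : ℝ → ℝ) :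
    ∫ φ in (-(π / 2))..(π / 2), c (π - φ) * g φ
      = ∫ φ in (-(π / 2))..(π / 2), c (φ + π) * g (-φ) := by
  have h := integral_comp_neg (a := -(π / 2)) (b := π / 2) fun φ => c (π - φ) * g φ
  simp only [sub_neg_eq_add, neg_neg] at h
  simp only [← h, add_comm π]

theorem tendsto_reluTransform_atBot (hper : Function.Periodic c (2 * π))
    (hc : ∀ a b, IntervalIntegrable c volume a b)
    (h₂ : ∫ φ in (-(π / 2))..(π / 2), c (φ + π) * cos φ = 0)
    (h₄ : ∫ φ in (-(π / 2))..(π / 2), c (φ + π) * sin φ = 0) :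
    Tendsto (reluTransform c) atBot (𝓝 0) := by
  have h := tendsto_reluTransform_atTop (hper.const_sub π)
    (fun a b => by simpa using (hc (π - a) (π - b)).comp_sub_left π)
    (by simpa [intervalIntegral_comp_pi_sub_mul] using h₂)
    (by simp [intervalIntegral_comp_pi_sub_mul, h₄])
  simpa [Function.comp_def, reluTransform_comp_pi_sub hper] using h.comp tendsto_neg_atBot_atTop

theorem tendsto_mul_deriv_reluTransform_atBot (hper : Function.Periodic c (2 * π))
    (hc : ∀ a b, IntervalIntegrable c volume a b)
    (h₂ : ∫ φ in (-(π / 2))..(π / 2), c (φ + π) * cos φ = 0) :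
    Tendsto (fun x => x * deriv (reluTransform c) x) atBot (𝓝 0) := by
  have h := tendsto_mul_deriv_reluTransform_atTop (hper.const_sub π)
    (fun a b => by simpa using (hc (π - a) (π - b)).comp_sub_left π)
    (by simpa [intervalIntegral_comp_pi_sub_mul] using h₂)
  have hderiv :
      ∀ x, deriv (reluTransform fun φ => c (π - φ)) x = -deriv (reluTransform c) (-x) :=
    fun x => by simp only [funext (reluTransform_comp_pi_sub hper), deriv_comp_neg]
  simpa [Function.comp_def, hderiv] using h.comp tendsto_neg_atBot_atTop

end ReluTransform

/-- If `c ∈ L¹[0,2π]` (extended `2π`-periodically) satisfies the four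
orthogonality conditions and `f(x) = ∫₀^{2π} c(φ) σ(x cos φ + sin φ) dφ`, then
`f(x) → 0` as `x → ±∞`, `f` is differentiable everywhere, and `x f'(x) → 0` as `x → ±∞`. -/
theorem statement12 (c : ℝ → ℝ)
    (hper : Function.Periodic c (2 * Real.pi))
    (hc : IntervalIntegrable c volume 0 (2 * Real.pi))
    (h1 : ∫ φ in (-(Real.pi/2))..(Real.pi/2), c φ * Real.cos φ = 0)
    (h2 : ∫ φ in (-(Real.pi/2))..(Real.pi/2), c (φ + Real.pi) * Real.cos φ = 0)
    (h3 : ∫ φ in (-(Real.pi/2))..(Real.pi/2), c φ * Real.sin φ = 0)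
    (h4 : ∫ φ in (-(Real.pi/2))..(Real.pi/2), c (φ + Real.pi) * Real.sin φ = 0)
    (f : ℝ → ℝ)
    (hf : ∀ x : ℝ, f x =
      ∫ φ in (0:ℝ)..(2 * Real.pi), c φ * max (x * Real.cos φ + Real.sin φ) 0) :
    Filter.Tendsto f Filter.atTop (nhds 0) ∧
    Filter.Tendsto f Filter.atBot (nhds 0) ∧
    (∀ x : ℝ, DifferentiableAt ℝ f x) ∧
    Filter.Tendsto (fun x : ℝ => x * deriv f x) Filter.atTop (nhds 0) ∧
    Filter.Tendsto (fun x : ℝ => x * deriv f x) Filter.atBot (nhds 0) := by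
  obtain rfl : f = reluTransform c := funext hf
  have hc' : ∀ a b, IntervalIntegrable c volume a b :=
    hper.intervalIntegrable₀ two_pi_pos.ne' hc
  exact ⟨tendsto_reluTransform_atTop hper hc' h1 h3, tendsto_reluTransform_atBot hper hc' h2 h4,
    fun x => (hasDerivAt_reluTransform hper hc' x).differentiableAt,
    tendsto_mul_deriv_reluTransform_atTop hper hc' h1,
    tendsto_mul_deriv_reluTransform_atBot hper hc' h2⟩
end

section
/- Suppose c ∈ L¹[0, 2π] satisfies ∫_{−π/2}^{π/2} c(φ)·cos φ dφ = ∫_{−π/2}^{π/2} c(φ+π)·cos φ dφ = 0 (with c extended 2π-periodically), and let f(x) = ∫₀^{2π} c(φ)·σ(x·cos φ + sin φ) dφ. Then for every x > 0, f is differentiable at x and f′(x) = −∫_{−π/2}^{−arctan x} ( c(φ) + c(φ + π) )·cos φ dφ. -/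
open MeasureTheory Real Set Filter

private lemma periodic_ii {f : ℝ → ℝ} {T : ℝ} (hT : 0 < T) (hp : Function.Periodic f T)
    (h : IntervalIntegrable f volume 0 T) (a b : ℝ) : IntervalIntegrable f volume a b := by
  have key : ∀ n : ℤ, IntervalIntegrable f volume ((n : ℝ) * T) ((n : ℝ) * T + T) := by
    intro n
    have h2 := h.comp_add_right (-((n : ℝ) * T))
    have he : (fun x => f (x + -((n : ℝ) * T))) = f := by
      funext y
      rw [← sub_eq_add_neg, hp.sub_int_mul_eq]
    rw [he] at h2
    have e1 : (0 : ℝ) - -((n : ℝ) * T) = (n : ℝ) * T := by ring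
    have e2 : T - -((n : ℝ) * T) = (n : ℝ) * T + T := by ring
    rwa [e1, e2] at h2
  have key2 : ∀ n : ℕ, IntervalIntegrable f volume (-((n : ℝ) * T)) ((n : ℝ) * T) := by
    intro n
    induction n with
    | zero => simp
    | succ n ih =>
      have hleft : IntervalIntegrable f volume (-(((n : ℝ) + 1) * T)) (-((n : ℝ) * T)) := by
        have := key (-(n + 1))
        have e1 : ((-(n + 1) : ℤ) : ℝ) * T = -(((n : ℝ) + 1) * T) := by push_cast; ring
        have e2 : ((-(n + 1) : ℤ) : ℝ) * T + T = -((n : ℝ) * T) := by push_cast; ring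
        rwa [e2, e1] at this
      have hright : IntervalIntegrable f volume ((n : ℝ) * T) (((n : ℝ) + 1) * T) := by
        have := key n
        have e1 : ((n : ℤ) : ℝ) * T = (n : ℝ) * T := by push_cast; ring
        have e2 : ((n : ℤ) : ℝ) * T + T = ((n : ℝ) + 1) * T := by push_cast; ring
        rwa [e2, e1] at this
      have := (hleft.trans ih).trans hright
      have e1 : (((n : ℕ) + 1 : ℕ) : ℝ) * T = ((n : ℝ) + 1) * T := by push_cast; ring
      rw [e1]
      exact this
  obtain ⟨n, hn⟩ := exists_nat_ge (max |a| |b| / T)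
  have hn' : max |a| |b| ≤ (n : ℝ) * T := by
    rw [div_le_iff₀ hT] at hn
    exact hn
  have ha : |a| ≤ (n : ℝ) * T := le_trans (le_max_left _ _) hn'
  have hb : |b| ≤ (n : ℝ) * T := le_trans (le_max_right _ _) hn'
  refine (key2 n).mono_set ?_
  apply Set.uIcc_subset_uIcc
  · rw [Set.uIcc_of_le (by linarith [abs_nonneg a] : -((n : ℝ) * T) ≤ (n : ℝ) * T)]
    exact ⟨by linarith [neg_abs_le a], by linarith [le_abs_self a]⟩
  · rw [Set.uIcc_of_le (by linarith [abs_nonneg b] : -((n : ℝ) * T) ≤ (n : ℝ) * T)]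
    exact ⟨by linarith [neg_abs_le b], by linarith [le_abs_self b]⟩

/-- If `c ∈ L¹[0,2π]` (extended `2π`-periodically) satisfies
`∫_{-π/2}^{π/2} c(φ) cos φ dφ = ∫_{-π/2}^{π/2} c(φ+π) cos φ dφ = 0` and
`f(x) = ∫₀^{2π} c(φ) σ(x cos φ + sin φ) dφ`, then for every `x > 0` the function `f` is
differentiable at `x` with `f'(x) = -∫_{-π/2}^{-arctan x} (c(φ) + c(φ+π)) cos φ dφ`. -/
theorem statement15 (c : ℝ → ℝ)
    (hper : Function.Periodic c (2 * Real.pi))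
    (hc : IntervalIntegrable c volume 0 (2 * Real.pi))
    (h1 : ∫ φ in (-(Real.pi/2))..(Real.pi/2), c φ * Real.cos φ = 0)
    (h2 : ∫ φ in (-(Real.pi/2))..(Real.pi/2), c (φ + Real.pi) * Real.cos φ = 0)
    (f : ℝ → ℝ)
    (hf : ∀ x : ℝ, f x =
      ∫ φ in (0:ℝ)..(2 * Real.pi), c φ * max (x * Real.cos φ + Real.sin φ) 0) :
    ∀ x : ℝ, 0 < x →
      HasDerivAt f
        (-∫ φ in (-(Real.pi/2))..(-Real.arctan x), (c φ + c (φ + Real.pi)) * Real.cos φ)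
        x := by
  intro x hx
  have hπ : (0:ℝ) < π := Real.pi_pos
  set a := Real.arctan x with ha
  have ha0 : 0 < a := by
    rw [ha, ← Real.arctan_zero]
    exact Real.arctan_strictMono hx
  have ha2 : a < π / 2 := Real.arctan_lt_pi_div_two x
  have hsq : (0:ℝ) < Real.sqrt (1 + x ^ 2) := Real.sqrt_pos.2 (by positivity)
  have hs : ∀ φ : ℝ, x * Real.cos φ + Real.sin φ = Real.sqrt (1 + x ^ 2) * Real.sin (φ + a) := by
    intro φ
    rw [Real.sin_add, ha, Real.cos_arctan, Real.sin_arctan]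
    field_simp
    ring
  -- sign lemmas
  have hpos : ∀ φ : ℝ, -a < φ → φ < π - a → 0 < x * Real.cos φ + Real.sin φ := by
    intro φ h₁ h₂
    rw [hs φ]
    exact mul_pos hsq (Real.sin_pos_of_pos_of_lt_pi (by linarith) (by linarith))
  have hneg : ∀ φ : ℝ, π - a ≤ φ → φ ≤ -a + 2 * π → x * Real.cos φ + Real.sin φ ≤ 0 := by
    intro φ h₁ h₂
    rw [hs φ]
    apply mul_nonpos_of_nonneg_of_nonpos (Real.sqrt_nonneg _)
    have : Real.sin (φ + a) = Real.sin (φ + a - 2 * π) := (Real.sin_sub_two_pi _).symm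
    rw [this]
    exact Real.sin_nonpos_of_nonpos_of_neg_pi_le (by linarith) (by linarith)
  -- a.e. nonvanishing
  have hae : ∀ᵐ φ : ℝ ∂volume, x * Real.cos φ + Real.sin φ ≠ 0 := by
    have hcnt : Set.Countable {φ : ℝ | x * Real.cos φ + Real.sin φ = 0} := by
      apply Set.Countable.mono _ (Set.countable_range fun n : ℤ => (n : ℝ) * π - a)
      intro φ hφ
      have h0 : Real.sin (φ + a) = 0 := by
        have := hφ
        rw [Set.mem_setOf_eq, hs φ] at this
        exact (mul_eq_zero.1 this).resolve_left (ne_of_gt hsq)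
      obtain ⟨n, hn⟩ := Real.sin_eq_zero_iff.1 h0
      refine ⟨n, ?_⟩
      simp only []
      linarith [hn]
    rw [ae_iff]
    have : {φ : ℝ | ¬x * Real.cos φ + Real.sin φ ≠ 0} =
        {φ : ℝ | x * Real.cos φ + Real.sin φ = 0} := by simp [not_not]
    rw [this]
    exact hcnt.measure_zero volume
  -- the derivative integrand
  set F' : ℝ → ℝ :=
    fun φ => if 0 < x * Real.cos φ + Real.sin φ then c φ * Real.cos φ else 0 with hF'
  have hcont : Continuous fun φ : ℝ => x * Real.cos φ + Real.sin φ :=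
    (continuous_const.mul Real.continuous_cos).add Real.continuous_sin
  have hmeas_c : AEStronglyMeasurable c (volume.restrict (Set.uIoc (0:ℝ) (2 * π))) := by
    rw [Set.uIoc_of_le (by positivity : (0:ℝ) ≤ 2 * π)]
    exact hc.1.aestronglyMeasurable
  have hsetm : MeasurableSet {φ : ℝ | 0 < x * Real.cos φ + Real.sin φ} :=
    (isOpen_lt continuous_const hcont).measurableSet
  have main := intervalIntegral.hasDerivAt_integral_of_dominated_loc_of_lip
    (F := fun y φ => c φ * max (y * Real.cos φ + Real.sin φ) 0) (F' := F') (x₀ := x)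
    (a := 0) (b := 2 * π) (bound := fun φ => |c φ|) (μ := volume) (s := Metric.ball x 1) (Metric.ball_mem_nhds x one_pos)
    ?_ ?_ ?_ ?_ ?_ ?_
  rotate_left
  · -- measurability of F y
    refine Filter.Eventually.of_forall fun y => ?_
    exact hmeas_c.mul (((( continuous_const.mul Real.continuous_cos).add
      Real.continuous_sin).max continuous_const).aestronglyMeasurable)
  · -- integrability at x
    exact hc.mul_continuousOn
      (((( continuous_const.mul Real.continuous_cos).add
        Real.continuous_sin).max continuous_const).continuousOn)
  · -- measurability of F'
    have hEq : F' = Set.indicator {φ : ℝ | 0 < x * Real.cos φ + Real.sin φ}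
        (fun φ => c φ * Real.cos φ) := by
      funext φ
      simp [hF', Set.indicator_apply]
    rw [hEq]
    exact (hmeas_c.mul Real.continuous_cos.aestronglyMeasurable).indicator hsetm
  · -- Lipschitz
    refine Filter.Eventually.of_forall fun t _ => ?_
    apply LipschitzOnWith.of_dist_le_mul
    intro y₁ _ y₂ _
    have hco : ((Real.nnabs (|c t|) : NNReal) : ℝ) = |c t| := by
      rw [Real.coe_nnabs, abs_abs]
    rw [hco, Real.dist_eq, Real.dist_eq, ← mul_sub]
    rw [abs_mul]
    have h3 : |max (y₁ * Real.cos t + Real.sin t) 0 - max (y₂ * Real.cos t + Real.sin t) 0|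
        ≤ |y₁ - y₂| := by
      calc |max (y₁ * Real.cos t + Real.sin t) 0 - max (y₂ * Real.cos t + Real.sin t) 0|
          ≤ |(y₁ * Real.cos t + Real.sin t) - (y₂ * Real.cos t + Real.sin t)| :=
            abs_max_sub_max_le_abs _ _ _
        _ = |(y₁ - y₂) * Real.cos t| := by
            rw [show (y₁ * Real.cos t + Real.sin t) - (y₂ * Real.cos t + Real.sin t)
              = (y₁ - y₂) * Real.cos t by ring]
        _ = |y₁ - y₂| * |Real.cos t| := abs_mul _ _
        _ ≤ |y₁ - y₂| * 1 :=
            mul_le_mul_of_nonneg_left (Real.abs_cos_le_one t) (abs_nonneg _)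
        _ = |y₁ - y₂| := mul_one _
    exact mul_le_mul_of_nonneg_left h3 (abs_nonneg _)
  · -- bound integrable
    exact hc.abs
  · -- differentiability a.e.
    filter_upwards [hae] with t ht _
    rcases lt_or_gt_of_ne ht with hlt | hgt
    · -- negative case : locally zero
      have hF't : F' t = 0 := by simp [hF', not_lt.2 hlt.le, lt_irrefl]
      rw [hF't]
      have hev : (fun y : ℝ => c t * max (y * Real.cos t + Real.sin t) 0) =ᶠ[nhds x]
          fun _ => (0 : ℝ) := by
        have hc0 : ContinuousAt (fun y : ℝ => y * Real.cos t + Real.sin t) x :=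
          ((continuous_id.mul continuous_const).add continuous_const).continuousAt
        have := hc0.eventually (eventually_lt_nhds hlt)
        filter_upwards [this] with y hy
        rw [max_eq_right hy.le, mul_zero]
      exact (hasDerivAt_const x (0:ℝ)).congr_of_eventuallyEq hev
    · -- positive case
      have hF't : F' t = c t * Real.cos t := by simp [hF', hgt]
      rw [hF't]
      have hev : (fun y : ℝ => c t * max (y * Real.cos t + Real.sin t) 0) =ᶠ[nhds x]
          fun y => c t * (y * Real.cos t + Real.sin t) := by
        have hc0 : ContinuousAt (fun y : ℝ => y * Real.cos t + Real.sin t) x :=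
          ((continuous_id.mul continuous_const).add continuous_const).continuousAt
        have := hc0.eventually (eventually_gt_nhds hgt)
        filter_upwards [this] with y hy
        rw [max_eq_left hy.le]
      have hd : HasDerivAt (fun y : ℝ => c t * (y * Real.cos t + Real.sin t))
          (c t * Real.cos t) x := by
        have hd0 : HasDerivAt (fun y : ℝ => y * Real.cos t) (Real.cos t) x :=
          hasDerivAt_mul_const _
        have hd1 : HasDerivAt (fun y : ℝ => y * Real.cos t + Real.sin t) (Real.cos t) x :=
          hd0.add_const _
        simpa using hd1.const_mul (c t)
      exact hd.congr_of_eventuallyEq hev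
  -- now main : IntervalIntegrable F' ∧ HasDerivAt ...
  -- periodicity of F'
  have hperF' : Function.Periodic F' (2 * π) := by
    intro φ
    simp only [hF', Real.cos_add_two_pi, Real.sin_add_two_pi, hper φ]
  have hii : ∀ s t : ℝ, IntervalIntegrable F' volume s t :=
    periodic_ii Real.two_pi_pos hperF' main.1
  have hgi : ∀ s t : ℝ, IntervalIntegrable (fun φ => c φ * Real.cos φ) volume s t :=
    fun s t => (periodic_ii Real.two_pi_pos hper hc s t).mul_continuousOn
      Real.continuous_cos.continuousOn
  -- shift the integral
  have hshift : (∫ φ in (0:ℝ)..(2 * π), F' φ) = ∫ φ in (-a)..(-a + 2 * π), F' φ := by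
    have := hperF'.intervalIntegral_add_eq 0 (-a)
    simpa using this
  have hsplit : (∫ φ in (-a)..(-a + 2 * π), F' φ)
      = (∫ φ in (-a)..(π - a), F' φ) + ∫ φ in (π - a)..(-a + 2 * π), F' φ :=
    (intervalIntegral.integral_add_adjacent_intervals (hii _ _) (hii _ _)).symm
  -- first piece
  have hp1 : (∫ φ in (-a)..(π - a), F' φ) = ∫ φ in (-a)..(π - a), c φ * Real.cos φ := by
    apply intervalIntegral.integral_congr_ae
    have h0 : ∀ᵐ φ : ℝ ∂volume, φ ≠ π - a := by
      rw [ae_iff]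
      have : {φ : ℝ | ¬φ ≠ π - a} = {π - a} := by ext φ; simp
      rw [this]
      exact measure_singleton _
    filter_upwards [h0] with φ hφ hmem
    rw [Set.uIoc_of_le (by linarith : -a ≤ π - a)] at hmem
    have hlt : φ < π - a := lt_of_le_of_ne hmem.2 hφ
    simp [hF', hpos φ hmem.1 hlt]
  -- second piece
  have hp2 : (∫ φ in (π - a)..(-a + 2 * π), F' φ) = 0 := by
    rw [intervalIntegral.integral_congr (g := fun _ => (0:ℝ)), intervalIntegral.integral_zero]
    intro φ hφ
    rw [Set.uIcc_of_le (by linarith : π - a ≤ -a + 2 * π)] at hφ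
    simp [hF', not_lt.2 (hneg φ hφ.1 hφ.2)]
  -- split the c∙cos integral at π/2
  have hsplit2 : (∫ φ in (-a)..(π - a), c φ * Real.cos φ)
      = (∫ φ in (-a)..(π/2), c φ * Real.cos φ)
        + ∫ φ in (π/2)..(π - a), c φ * Real.cos φ :=
    (intervalIntegral.integral_add_adjacent_intervals (hgi _ _) (hgi _ _)).symm
  have e1 : (∫ φ in (-a)..(π/2), c φ * Real.cos φ)
      = -∫ φ in (-(π/2))..(-a), c φ * Real.cos φ := by
    have := intervalIntegral.integral_add_adjacent_intervals (a := -(π/2)) (b := -a)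
      (c := π/2) (hgi _ _) (hgi _ _)
    rw [h1] at this
    linarith
  have e2 : (∫ φ in (π/2)..(π - a), c φ * Real.cos φ)
      = -∫ φ in (-(π/2))..(-a), c (φ + π) * Real.cos φ := by
    have hcomp := intervalIntegral.integral_comp_add_right (a := -(π/2)) (b := -a)
      (fun φ => c φ * Real.cos φ) π
    have he1 : -(π/2) + π = π/2 := by ring
    have he2 : -a + π = π - a := by ring
    rw [he1, he2] at hcomp
    rw [← hcomp]
    have : (∫ φ in (-(π/2))..(-a), c (φ + π) * Real.cos (φ + π))
        = ∫ φ in (-(π/2))..(-a), -(c (φ + π) * Real.cos φ) := by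
      apply intervalIntegral.integral_congr
      intro φ _
      show c (φ + π) * Real.cos (φ + π) = -(c (φ + π) * Real.cos φ)
      rw [Real.cos_add_pi]
      ring
    rw [this, intervalIntegral.integral_neg]
  -- integrability of the shifted function
  have i2 : IntervalIntegrable (fun φ => c (φ + π) * Real.cos φ) volume (-(π/2)) (-a) := by
    have hcc : IntervalIntegrable (fun φ => c (φ + π)) volume (-(π/2)) (-a) := by
      have := (periodic_ii Real.two_pi_pos hper hc (π/2) (π - a)).comp_add_right π
      have he1 : π/2 - π = -(π/2) := by ring
      have he2 : π - a - π = -a := by ring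
      rwa [he1, he2] at this
    exact hcc.mul_continuousOn Real.continuous_cos.continuousOn
  have efin : (-∫ φ in (-(π/2))..(-a), (c φ + c (φ + π)) * Real.cos φ)
      = ∫ φ in (0:ℝ)..(2 * π), F' φ := by
    have hadd : (∫ φ in (-(π/2))..(-a), (c φ + c (φ + π)) * Real.cos φ)
        = (∫ φ in (-(π/2))..(-a), c φ * Real.cos φ)
          + ∫ φ in (-(π/2))..(-a), c (φ + π) * Real.cos φ := by
      rw [← intervalIntegral.integral_add (hgi _ _) i2]
      apply intervalIntegral.integral_congr
      intro φ _
      ring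
    rw [hadd, hshift, hsplit, hp1, hp2, hsplit2, e1, e2]
    ring
  rw [funext hf, efin]
  exact main.2
end
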